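/- arXiv:2110.12634 — 5 statements merged into one kernel-verified Lean document; each statement's English description precedes it below -/
import Mathlib

section
/- Let (F_k)_k be a filtration on a probability space, let (V_k)_k, (U_k)_k, (Z_k)_k be nonnegative sequences of (F_k)_k-adapted integrable random processes, and let (γ_k)_k be a sequence of positive real numbers such that ∑_k Z_k < ∞ almost surely and ∏_k (1 + γ_k) < ∞. If for every k ∈ ℕ one has E[V_{k+1} | F_k] + U_{k+1} ≤ (1 + γ_k) V_k + Z_k almost surely, then the sequence (V_k)_k converges almost surely and ∑_k U_k < ∞ almost surely. -/
/-!
Dividing by `a k = ∏ j < k, (1 + γ j)` reduces the statement to the case `γ = 0`. There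
`S k = V k + ∑ j < k, U (j + 1) - ∑ j < k, Z j` is a supermartingale bounded below by the
predictable process `-∑ j < k, Z j`. Stopped just before that sum exceeds `r`, it is a
supermartingale bounded below by `-r`, hence converges a.e.; on `{∑ Z ≤ r}` nothing is stopped.
So `S` converges wherever `∑ Z < ∞`, which bounds the partial sums of `U` and makes `V` converge.
-/

open Filter Topology

namespace MeasureTheory

variable {Ω : Type*} {m0 : MeasurableSpace Ω} {μ : Measure Ω} {ℱ : Filtration ℕ m0}

theorem Supermartingale.exists_ae_tendsto_of_nonneg [IsFiniteMeasure μ] {f : ℕ → Ω → ℝ}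
    (hf : Supermartingale f ℱ μ) (hf0 : ∀ n ω, 0 ≤ f n ω) :
    ∀ᵐ ω ∂μ, ∃ l, Tendsto (fun n => f n ω) atTop (𝓝 l) := by
  have hbdd : ∀ n, eLpNorm ((-f) n) 1 μ ≤ Real.toNNReal (∫ ω, f 0 ω ∂μ) := by
    intro n
    rw [Pi.neg_apply, eLpNorm_neg, eLpNorm_one_eq_lintegral_enorm,
      ← ofReal_integral_norm_eq_lintegral_enorm (hf.integrable n)]
    refine ENNReal.ofReal_le_ofReal ?_
    simp only [Real.norm_of_nonneg (hf0 n _)]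
    simpa using hf.setIntegral_le (Nat.zero_le n) MeasurableSet.univ
  filter_upwards [hf.neg.exists_ae_tendsto_of_bdd hbdd] with ω ⟨l, hl⟩
  exact ⟨-l, by simpa using hl.neg⟩

theorem exists_stoppedProcess_eq {β : Type*} (u : ℕ → Ω → β) (τ : Ω → WithTop ℕ) (n : ℕ)
    (ω : Ω) : ∃ k : ℕ, (k : WithTop ℕ) ≤ τ ω ∧ stoppedProcess u τ n ω = u k ω :=
  ⟨_, (WithTop.coe_untopD_le _ _).trans (min_le_right _ _), rfl⟩

theorem Supermartingale.exists_tendsto_of_bddAbove_of_neg_le [IsFiniteMeasure μ]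
    {S B : ℕ → Ω → ℝ} (hS : Supermartingale S ℱ μ) (hB : Adapted ℱ fun n => B (n + 1))
    (hB0 : ∀ ω, B 0 ω = 0) (hSB : ∀ n ω, -B n ω ≤ S n ω) :
    ∀ᵐ ω ∂μ, BddAbove (Set.range fun n => B n ω) →
      ∃ l, Tendsto (fun n => S n ω) atTop (𝓝 l) := by
  -- `B` is predictable, so `τ r` is a stopping time, and `B k ≤ r` for every `k ≤ τ r`.
  let τ : ℕ → Ω → WithTop ℕ := fun r => hittingAfter (fun n => B (n + 1)) (Set.Ioi (r : ℝ)) 0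
  have hS_ge : ∀ (r k : ℕ) ω, (k : WithTop ℕ) ≤ τ r ω → -(r : ℝ) ≤ S k ω := by
    rintro r (_ | j) ω hk
    · linarith [hSB 0 ω, hB0 ω, r.cast_nonneg (α := ℝ)]
    · have hBj := notMem_of_lt_hittingAfter
        (lt_of_lt_of_le (WithTop.coe_lt_coe.2 j.lt_succ_self) hk) (Nat.zero_le j)
      simp only [Set.mem_Ioi, not_lt] at hBj
      linarith [hSB (j + 1) ω]
  have hconv : ∀ r : ℕ, ∀ᵐ ω ∂μ, ∃ l,
      Tendsto (fun n => stoppedProcess S (τ r) n ω + r) atTop (𝓝 l) := by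
    intro r
    have hstop : Supermartingale (stoppedProcess S (τ r)) ℱ μ := by
      simpa using (hS.neg.stoppedProcess (hB.isStoppingTime_hittingAfter measurableSet_Ioi)).neg
    refine (hstop.add_martingale (martingale_const ℱ μ (r : ℝ))).exists_ae_tendsto_of_nonneg ?_
    intro n ω
    obtain ⟨k, hk, hkeq⟩ := exists_stoppedProcess_eq S (τ r) n ω
    simp only [Pi.add_apply, hkeq]
    linarith [hS_ge r k ω hk]
  filter_upwards [ae_all_iff.2 hconv] with ω hω ⟨b, hb⟩
  obtain ⟨r, hr⟩ := exists_nat_ge b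
  have hτ : τ r ω = ⊤ := hittingAfter_eq_top_iff.2 fun j _ =>
    by simpa using (hb ⟨j + 1, rfl⟩).trans hr
  obtain ⟨l, hl⟩ := hω r
  refine ⟨l - r, (hl.sub_const (r : ℝ)).congr fun n => ?_⟩
  rw [stoppedProcess_eq_of_le (hτ ▸ le_top)]
  ring

theorem condExp_add_ae_le_of_condExp_add_ae_le {m : MeasurableSpace Ω} (hm : m ≤ m0)
    [SigmaFinite (μ.trim hm)] {X Y W : Ω → ℝ} (hX : Integrable X μ) (hY : Integrable Y μ)
    (hW : StronglyMeasurable[m] W) (hWi : Integrable W μ) (h : μ[X | m] + Y ≤ᵐ[μ] W) :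
    μ[X + Y | m] ≤ᵐ[μ] W :=
  calc μ[X + Y | m]
    _ =ᵐ[μ] μ[X | m] + μ[Y | m] := condExp_add hX hY m
    _ = μ[μ[X | m] | m] + μ[Y | m] := by
      rw [condExp_of_stronglyMeasurable hm stronglyMeasurable_condExp integrable_condExp]
    _ =ᵐ[μ] μ[μ[X | m] + Y | m] := (condExp_add integrable_condExp hY m).symm
    _ ≤ᵐ[μ] μ[W | m] := condExp_mono (integrable_condExp.add hY) hWi h
    _ = W := condExp_of_stronglyMeasurable hm hW hWi

theorem ae_tendsto_and_summable_of_condExp_add_le [IsFiniteMeasure μ] {V U Z : ℕ → Ω → ℝ}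
    (hV : Adapted ℱ V) (hU : Adapted ℱ U) (hZ : Adapted ℱ Z)
    (hV0 : ∀ k ω, 0 ≤ V k ω) (hU0 : ∀ k ω, 0 ≤ U k ω)
    (hVi : ∀ k, Integrable (V k) μ) (hUi : ∀ k, Integrable (U k) μ)
    (hZi : ∀ k, Integrable (Z k) μ) (hZsum : ∀ᵐ ω ∂μ, Summable fun k => Z k ω)
    (hrec : ∀ k, ∀ᵐ ω ∂μ, μ[V (k + 1) | ℱ k] ω + U (k + 1) ω ≤ V k ω + Z k ω) :
    ∀ᵐ ω ∂μ, (∃ l, Tendsto (fun k => V k ω) atTop (𝓝 l)) ∧ Summable fun k => U k ω := by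
  set P : ℕ → Ω → ℝ := fun k ω => ∑ j ∈ Finset.range k, U (j + 1) ω with hP
  set B : ℕ → Ω → ℝ := fun k ω => ∑ j ∈ Finset.range k, Z j ω
  have hP_meas : ∀ k, Measurable[ℱ k] (P k) := fun k => Finset.measurable_fun_sum _ fun j hj =>
    hU.measurable_le (Finset.mem_range.1 hj)
  have hB_adapted : Adapted ℱ B := fun k => Finset.measurable_fun_sum _ fun j hj =>
    hZ.measurable_le (Finset.mem_range.1 hj).le
  have hB_pred : Adapted ℱ fun k => B (k + 1) := fun k => Finset.measurable_fun_sum _ fun j hj =>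
    hZ.measurable_le (Finset.mem_range_succ_iff.1 hj)
  have hPi : ∀ k, Integrable (P k) μ := fun k => integrable_finsetSum _ fun j _ => hUi (j + 1)
  have hBi : ∀ k, Integrable (B k) μ := fun k => integrable_finsetSum _ fun j _ => hZi j
  have hS : Supermartingale (fun k => V k + P k - B k) ℱ μ := by
    refine supermartingale_nat (fun k => ?_) (fun k => ((hVi k).add (hPi k)).sub (hBi k))
      fun k => ?_
    · exact (((hV k).add (hP_meas k)).sub (hB_adapted k)).stronglyMeasurable
    have hsplit : V (k + 1) + P (k + 1) - B (k + 1)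
        = V (k + 1) + U (k + 1) + (P k - B (k + 1)) := by
      ext ω
      simp only [hP, Pi.add_apply, Pi.sub_apply, Finset.sum_range_succ]
      ring
    have hG : StronglyMeasurable[ℱ k] (P k - B (k + 1)) :=
      ((hP_meas k).sub (hB_pred k)).stronglyMeasurable
    have hstep := condExp_add_ae_le_of_condExp_add_ae_le (ℱ.le k) (hVi (k + 1)) (hUi (k + 1))
      ((hV k).add (hZ k)).stronglyMeasurable ((hVi k).add (hZi k)) (hrec k)
    rw [hsplit]
    filter_upwards [condExp_add ((hVi (k + 1)).add (hUi (k + 1))) ((hPi k).sub (hBi (k + 1))) (ℱ k),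
      hstep] with ω hadd hω
    rw [hadd, Pi.add_apply, condExp_of_stronglyMeasurable (ℱ.le k) hG ((hPi k).sub (hBi (k + 1)))]
    have hB_succ : B (k + 1) ω = B k ω + Z k ω := Finset.sum_range_succ _ _
    simp only [Pi.add_apply, Pi.sub_apply] at hω ⊢
    linarith
  have hSB : ∀ k ω, -B k ω ≤ (V k + P k - B k) ω := fun k ω => by
    have hPk : 0 ≤ P k ω := Finset.sum_nonneg fun j _ => hU0 (j + 1) ω
    simp only [Pi.add_apply, Pi.sub_apply]
    linarith [hV0 k ω]
  filter_upwards [hS.exists_tendsto_of_bddAbove_of_neg_le hB_pred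
    (fun _ => Finset.sum_range_zero _) hSB, hZsum] with ω hconv hZω
  have hBt : Tendsto (fun k => B k ω) atTop (𝓝 (∑' j, Z j ω)) := hZω.hasSum.tendsto_sum_nat
  obtain ⟨s, hs⟩ := hconv hBt.bddAbove_range
  simp only [Pi.add_apply, Pi.sub_apply] at hs
  obtain ⟨c, hc⟩ := (hs.add hBt).bddAbove_range
  have hPsum : Summable fun j => U (j + 1) ω := by
    refine summable_of_sum_range_le (c := c) (fun j => hU0 _ ω) fun k => ?_
    have := hc ⟨k, rfl⟩
    simp only [sub_add_cancel] at this
    linarith [hV0 k ω]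
  refine ⟨⟨s - ∑' j, U (j + 1) ω + ∑' j, Z j ω, ?_⟩, (summable_nat_add_iff 1).1 hPsum⟩
  exact ((hs.sub hPsum.hasSum.tendsto_sum_nat).add hBt).congr fun k => by ring

theorem ae_condExp_inv_smul_add_le {V U Z : ℕ → Ω → ℝ} {γ a : ℕ → ℝ} (ha : ∀ k, 0 < a k)
    (ha_succ : ∀ k, a (k + 1) = a k * (1 + γ k))
    (hrec : ∀ k, ∀ᵐ ω ∂μ, μ[V (k + 1) | ℱ k] ω + U (k + 1) ω ≤ (1 + γ k) * V k ω + Z k ω)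
    (k : ℕ) :
    ∀ᵐ ω ∂μ, μ[(a (k + 1))⁻¹ • V (k + 1) | ℱ k] ω + (a (k + 1))⁻¹ • U (k + 1) ω
      ≤ (a k)⁻¹ • V k ω + (a (k + 1))⁻¹ • Z k ω := by
  have hγ : 1 + γ k ≠ 0 := fun h => (ha (k + 1)).ne' (by rw [ha_succ, h, mul_zero])
  have hinv : (a (k + 1))⁻¹ * (1 + γ k) = (a k)⁻¹ := by
    rw [ha_succ, mul_inv, mul_assoc, inv_mul_cancel₀ hγ, mul_one]
  filter_upwards [condExp_smul (a (k + 1))⁻¹ (V (k + 1)) (ℱ k), hrec k] with ω hcond hω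
  simp only [hcond, Pi.smul_apply, smul_eq_mul]
  calc (a (k + 1))⁻¹ * μ[V (k + 1) | ℱ k] ω + (a (k + 1))⁻¹ * U (k + 1) ω
      = (a (k + 1))⁻¹ * (μ[V (k + 1) | ℱ k] ω + U (k + 1) ω) := (mul_add _ _ _).symm
    _ ≤ (a (k + 1))⁻¹ * ((1 + γ k) * V k ω + Z k ω) :=
      mul_le_mul_of_nonneg_left hω (inv_nonneg.2 (ha (k + 1)).le)
    _ = (a k)⁻¹ * V k ω + (a (k + 1))⁻¹ * Z k ω := by rw [mul_add, ← mul_assoc, hinv]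

end MeasureTheory

open MeasureTheory Filter Topology

theorem robbins_siegmund_general
    {Ω : Type*} {m0 : MeasurableSpace Ω} (μ : Measure Ω) [IsProbabilityMeasure μ]
    (ℱ : Filtration ℕ m0)
    (V U Z : ℕ → Ω → ℝ) (γ : ℕ → ℝ)
    (hVadapted : Adapted ℱ V) (hUadapted : Adapted ℱ U) (hZadapted : Adapted ℱ Z)
    (hVnonneg : ∀ k ω, 0 ≤ V k ω) (hUnonneg : ∀ k ω, 0 ≤ U k ω)
    (hVint : ∀ k, Integrable (V k) μ) (hUint : ∀ k, Integrable (U k) μ)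
    (hZint : ∀ k, Integrable (Z k) μ)
    (hγpos : ∀ k, 0 < γ k)
    (hZsum : ∀ᵐ ω ∂μ, Summable (fun k => Z k ω))
    (hγprod : Multipliable (fun k => 1 + γ k))
    (hrec : ∀ k, ∀ᵐ ω ∂μ,
      (μ[V (k + 1) | ℱ k]) ω + U (k + 1) ω ≤ (1 + γ k) * V k ω + Z k ω) :
    ∀ᵐ ω ∂μ, (∃ l : ℝ, Tendsto (fun k => V k ω) atTop (𝓝 l)) ∧
      Summable (fun k => U k ω) := by
  set a : ℕ → ℝ := fun k => ∏ j ∈ Finset.range k, (1 + γ j)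
  have ha_one : ∀ k, 1 ≤ a k := fun k => Finset.one_le_prod fun j _ => by linarith [hγpos j]
  have ha_pos : ∀ k, 0 < a k := fun k => one_pos.trans_le (ha_one k)
  have ha_inv : ∀ k, 0 ≤ (a k)⁻¹ ∧ ‖(a k)⁻¹‖ ≤ 1 := fun k =>
    ⟨inv_nonneg.2 (ha_pos k).le,
      by simpa [abs_of_pos (ha_pos k)] using inv_le_one_of_one_le₀ (ha_one k)⟩
  have ha_tendsto : Tendsto a atTop (𝓝 (∏' j, (1 + γ j))) := hγprod.hasProd.tendsto_prod_nat
  obtain ⟨A, hA⟩ := ha_tendsto.bddAbove_range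
  have hZsum' : ∀ᵐ ω ∂μ, Summable fun k => (a (k + 1))⁻¹ • Z k ω := hZsum.mono fun ω hω =>
    hω.norm.of_norm_bounded fun k => (norm_smul_le _ _).trans
      (mul_le_of_le_one_left (norm_nonneg _) (ha_inv (k + 1)).2)
  filter_upwards [ae_tendsto_and_summable_of_condExp_add_le (ℱ := ℱ)
    (fun k => (hVadapted k).const_smul (a k)⁻¹) (fun k => (hUadapted k).const_smul (a k)⁻¹)
    (fun k => (hZadapted k).const_smul (a (k + 1))⁻¹)
    (fun k ω => smul_nonneg (ha_inv k).1 (hVnonneg k ω))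
    (fun k ω => smul_nonneg (ha_inv k).1 (hUnonneg k ω))
    (fun k => (hVint k).smul _) (fun k => (hUint k).smul _) (fun k => (hZint k).smul _) hZsum'
    (ae_condExp_inv_smul_add_le ha_pos (fun k => Finset.prod_range_succ _ k) hrec)]
    with ω ⟨⟨l, hl⟩, hU⟩
  refine ⟨⟨(∏' j, (1 + γ j)) * l, (ha_tendsto.mul hl).congr fun k => ?_⟩, ?_⟩
  · exact mul_inv_cancel_left₀ (ha_pos k).ne' (V k ω)
  refine (hU.mul_left A).of_nonneg_of_le (fun k => hUnonneg k ω) fun k => ?_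
  calc U k ω = a k * ((a k)⁻¹ • U k) ω := (mul_inv_cancel_left₀ (ha_pos k).ne' (U k ω)).symm
    _ ≤ A * ((a k)⁻¹ • U k) ω :=
      mul_le_mul_of_nonneg_right (hA ⟨k, rfl⟩) (smul_nonneg (ha_inv k).1 (hUnonneg k ω))

/-- Robbins–Siegmund almost-supermartingale convergence lemma. -/
theorem robbins_siegmund
    {Ω : Type*} {m0 : MeasurableSpace Ω} (μ : Measure Ω) [IsProbabilityMeasure μ]
    (ℱ : Filtration ℕ m0)
    (V U Z : ℕ → Ω → ℝ) (γ : ℕ → ℝ)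
    (hVadapted : Adapted ℱ V) (hUadapted : Adapted ℱ U) (hZadapted : Adapted ℱ Z)
    (hVnonneg : ∀ k ω, 0 ≤ V k ω) (hUnonneg : ∀ k ω, 0 ≤ U k ω)
    (hZnonneg : ∀ k ω, 0 ≤ Z k ω)
    (hVint : ∀ k, Integrable (V k) μ) (hUint : ∀ k, Integrable (U k) μ)
    (hZint : ∀ k, Integrable (Z k) μ)
    (hγpos : ∀ k, 0 < γ k)
    (hZsum : ∀ᵐ ω ∂μ, Summable (fun k => Z k ω))
    (hγprod : Multipliable (fun k => 1 + γ k))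
    (hrec : ∀ k, ∀ᵐ ω ∂μ,
      (μ[V (k + 1) | ℱ k]) ω + U (k + 1) ω ≤ (1 + γ k) * V k ω + Z k ω) :
    ∀ᵐ ω ∂μ, (∃ l : ℝ, Tendsto (fun k => V k ω) atTop (𝓝 l)) ∧
      Summable (fun k => U k ω) :=
  robbins_siegmund_general μ ℱ V U Z γ hVadapted hUadapted hZadapted hVnonneg hUnonneg hVint hUint
    hZint hγpos hZsum hγprod hrec
end

section
/- Let f : ℝ^d → ℝ be L-smooth (its gradient is L-Lipschitz) with infimum value f_* attained at some minimizer. Let x ∈ ℝ^d, let g be a square-integrable random vector in ℝ^d with E[g] = ∇f(x) and E[‖g‖²] ≤ A(f(x) − f_*) + B‖∇f(x)‖² + C for constants A, B, C ≥ 0, let u > 0 and η > 0 be scalars, and set x⁺ = x − η u g. Then E[f(x⁺) − f_*] + (η/2)(2u − u² L B η) ‖∇f(x)‖² ≤ (1 + u² η² A L)(f(x) − f_*) + (u² η² L C)/2. -/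
/-!
Along the segment from `x` to `x + v`, the derivative of `f` differs from `⟪∇f x, v⟫` by at most
`L t ‖v‖²`, which gives the quadratic upper bound `f (x + v) ≤ f x + ⟪∇f x, v⟫ + L/2 ‖v‖²`.
Taking `v = -ηu g` and integrating, unbiasedness turns the linear term into `-ηu ‖∇f x‖²` and
expected smoothness bounds the second moment; the stated constant `u²η²AL` (twice what is needed)
is then absorbed using `f x - f_* ≥ 0`.
-/

open MeasureTheory Set
open scoped NNReal RealInnerProductSpace

section

variable {E : Type*} [NormedAddCommGroup E] [InnerProductSpace ℝ E] [CompleteSpace E]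

theorem image_add_le_of_lipschitzWith_gradient {f : E → ℝ} {K : ℝ≥0} (hf : Differentiable ℝ f)
    (hlip : LipschitzWith K (gradient f)) (x v : E) :
    f (x + v) ≤ f x + ⟪gradient f x, v⟫ + K / 2 * ‖v‖ ^ 2 := by
  set φ : ℝ → ℝ := fun t => f (x + t • v) - f x - t * ⟪gradient f x, v⟫
  have hφ : ∀ t, HasDerivAt φ ⟪gradient f (x + t • v) - gradient f x, v⟫ t := by
    intro t
    have hline : HasDerivAt (fun s : ℝ => x + s • v) v t := by
      simpa using ((hasDerivAt_id t).smul_const v).const_add x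
    refine ((((hf _).hasFDerivAt.comp_hasDerivAt t hline).sub_const (f x)).sub
      ((hasDerivAt_id t).mul_const ⟪gradient f x, v⟫)).congr_deriv ?_
    simp only [inner_sub_left, inner_gradient_left, one_mul]
  have hquad : ∀ t, HasDerivAt (fun t : ℝ => K / 2 * t ^ 2 * ‖v‖ ^ 2) (K * t * ‖v‖ ^ 2) t := by
    intro t
    refine (((hasDerivAt_pow 2 t).const_mul (K / 2 : ℝ)).mul_const (‖v‖ ^ 2)).congr_deriv ?_
    push_cast; ring
  have hbound : ∀ t ∈ Ico (0 : ℝ) 1,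
      ⟪gradient f (x + t • v) - gradient f x, v⟫ ≤ K * t * ‖v‖ ^ 2 := by
    intro t ht
    calc _ ≤ ‖gradient f (x + t • v) - gradient f x‖ * ‖v‖ := real_inner_le_norm _ _
      _ ≤ K * ‖t • v‖ * ‖v‖ := by gcongr; simpa using hlip.norm_sub_le (x + t • v) x
      _ = K * t * ‖v‖ ^ 2 := by rw [norm_smul, Real.norm_of_nonneg ht.1]; ring
  have key := image_le_of_deriv_right_le_deriv_boundary
    (fun t _ => (hφ t).continuousAt.continuousWithinAt) (fun t _ => (hφ t).hasDerivWithinAt)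
    (by simp [φ]) (fun t _ => (hquad t).continuousAt.continuousWithinAt)
    (fun t _ => (hquad t).hasDerivWithinAt) hbound (right_mem_Icc.2 zero_le_one)
  simp only [φ, one_smul, one_mul, one_pow, mul_one] at key
  linarith

theorem integral_sub_le_of_lipschitzWith_gradient {Ω : Type*} [MeasurableSpace Ω]
    {μ : Measure Ω} [IsProbabilityMeasure μ] {f : E → ℝ} {K : ℝ≥0} (hf : Differentiable ℝ f)
    (hlip : LipschitzWith K (gradient f)) {m : ℝ} (hm : ∀ y, m ≤ f y) {g : Ω → E}
    (hg : Integrable g μ) (hg2 : Integrable (fun ω => ‖g ω‖ ^ 2) μ) (x : E) (s : ℝ) :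
    ∫ ω, (f (x - s • g ω) - m) ∂μ
      ≤ f x - m - s * ⟪gradient f x, ∫ ω, g ω ∂μ⟫ + K / 2 * s ^ 2 * ∫ ω, ‖g ω‖ ^ 2 ∂μ := by
  set G := gradient f x
  have hbound : ∀ ω, f (x - s • g ω) - m ≤ f x - m - s * ⟪G, g ω⟫ + K / 2 * s ^ 2 * ‖g ω‖ ^ 2 := by
    intro ω
    have := image_add_le_of_lipschitzWith_gradient hf hlip x (-(s • g ω))
    rw [← sub_eq_add_neg, inner_neg_right, real_inner_smul_right, norm_neg, norm_smul, mul_pow,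
      Real.norm_eq_abs, sq_abs] at this
    linarith
  have hlin : Integrable (fun ω => f x - m - s * ⟪G, g ω⟫) μ :=
    (integrable_const _).sub ((hg.const_inner G).const_mul s)
  calc ∫ ω, (f (x - s • g ω) - m) ∂μ
      ≤ ∫ ω, (f x - m - s * ⟪G, g ω⟫ + K / 2 * s ^ 2 * ‖g ω‖ ^ 2) ∂μ :=
        integral_mono_of_nonneg (ae_of_all _ fun ω => sub_nonneg.2 (hm _))
          (hlin.add (hg2.const_mul _)) (ae_of_all _ hbound)
    _ = f x - m - s * ⟪G, ∫ ω, g ω ∂μ⟫ + K / 2 * s ^ 2 * ∫ ω, ‖g ω‖ ^ 2 ∂μ := by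
        rw [integral_add hlin (hg2.const_mul _), integral_sub (integrable_const _)
          ((hg.const_inner G).const_mul s), integral_const_mul, integral_const_mul,
          integral_inner hg, integral_const, probReal_univ, one_smul]

end

theorem sgd_one_step_descent_general
    {d : ℕ} {Ω : Type*} [MeasurableSpace Ω] (μ : Measure Ω) [IsProbabilityMeasure μ]
    (f : EuclideanSpace ℝ (Fin d) → ℝ) (L A B C fstar : ℝ)
    (x : EuclideanSpace ℝ (Fin d))
    (hL : 0 < L) (hA : 0 ≤ A)
    (hdiff : Differentiable ℝ f)
    (hlip : LipschitzWith L.toNNReal (fun y => gradient f y))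
    (hmin : ∀ y, fstar ≤ f y)
    (g : Ω → EuclideanSpace ℝ (Fin d))
    (hgint : Integrable g μ)
    (hgsq : Integrable (fun ω => ‖g ω‖ ^ 2) μ)
    (hmean : ∫ ω, g ω ∂μ = gradient f x)
    (hES : ∫ ω, ‖g ω‖ ^ 2 ∂μ ≤ A * (f x - fstar) + B * ‖gradient f x‖ ^ 2 + C)
    (u η : ℝ) :
    (∫ ω, (f (x - (η * u) • g ω) - fstar) ∂μ)
        + (η / 2) * (2 * u - u ^ 2 * L * B * η) * ‖gradient f x‖ ^ 2
      ≤ (1 + u ^ 2 * η ^ 2 * A * L) * (f x - fstar) + u ^ 2 * η ^ 2 * L * C / 2 := by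
  have descent := integral_sub_le_of_lipschitzWith_gradient hdiff hlip hmin hgint hgsq x (η * u)
  rw [Real.coe_toNNReal L hL.le, hmean, real_inner_self_eq_norm_sq] at descent
  have hc : 0 ≤ L / 2 * (η * u) ^ 2 := by positivity
  have hgap : 0 ≤ f x - fstar := sub_nonneg.2 (hmin x)
  linarith [mul_le_mul_of_nonneg_left hES hc, mul_nonneg (mul_nonneg hc hA) hgap]

/-- One-step descent inequality for SGD with a multiplicatively perturbed
learning rate, under expected smoothness. -/
theorem sgd_one_step_descent
    {d : ℕ} {Ω : Type*} [MeasurableSpace Ω] (μ : Measure Ω) [IsProbabilityMeasure μ]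
    (f : EuclideanSpace ℝ (Fin d) → ℝ) (L A B C fstar : ℝ)
    (xstar x : EuclideanSpace ℝ (Fin d))
    (hL : 0 < L) (hA : 0 ≤ A) (hB : 0 ≤ B) (hC : 0 ≤ C)
    (hdiff : Differentiable ℝ f)
    (hlip : LipschitzWith L.toNNReal (fun y => gradient f y))
    (hstar : f xstar = fstar) (hmin : ∀ y, fstar ≤ f y)
    (g : Ω → EuclideanSpace ℝ (Fin d))
    (hgmeas : Measurable g)
    (hgint : Integrable g μ)
    (hgsq : Integrable (fun ω => ‖g ω‖ ^ 2) μ)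
    (hmean : ∫ ω, g ω ∂μ = gradient f x)
    (hES : ∫ ω, ‖g ω‖ ^ 2 ∂μ ≤ A * (f x - fstar) + B * ‖gradient f x‖ ^ 2 + C)
    (u η : ℝ) (hu : 0 < u) (hη : 0 < η) :
    (∫ ω, (f (x - (η * u) • g ω) - fstar) ∂μ)
        + (η / 2) * (2 * u - u ^ 2 * L * B * η) * ‖gradient f x‖ ^ 2
      ≤ (1 + u ^ 2 * η ^ 2 * A * L) * (f x - fstar) + u ^ 2 * η ^ 2 * L * C / 2 :=
  sgd_one_step_descent_general μ f L A B C fstar x hL hA hdiff hlip hmin g hgint hgsq hmean hES u η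
end

section
/- Let 0 < c_1 < 1 < c_2 satisfy c_1 ln c_1 + c_2 ln c_2 = 0 (equivalently, ln c_2 = W(−c_1 ln c_1) where W is the principal branch of the Lambert-W function), and for each integer k ≥ 0 let E[u_k] = (c_1^{1/(k+1)} + c_2^{1/(k+1)})/2 be the mean of a uniform random variable on [c_1^{1/(k+1)}, c_2^{1/(k+1)}]. Then the sequence k ↦ E[u_k] is monotone for all k ≥ 0. -/
/-!
The mean is `g (1 / (k + 1)) / 2` with `g x = c₁ ^ x + c₂ ^ x`. The derivative
`g' x = c₁ ^ x log c₁ + c₂ ^ x log c₂` is nondecreasing, since each `x ↦ c ^ x log c` is,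
and `g' 1 = c₁ log c₁ + c₂ log c₂ = 0`. So `g` is antitone on `(-∞, 1]`, and composing it with
the antitone map `k ↦ 1 / (k + 1)` into `(0, 1]` gives a monotone sequence.
-/

open Real Set

lemma Real.monotone_rpow_mul_log {c : ℝ} (hc : 0 < c) : Monotone fun x : ℝ => c ^ x * log c := by
  intro x y hxy
  rcases le_total c 1 with hc1 | hc1
  · exact mul_le_mul_of_nonpos_right (rpow_le_rpow_of_exponent_ge hc hc1 hxy)
      (log_nonpos hc.le hc1)
  · exact mul_le_mul_of_nonneg_right (rpow_le_rpow_of_exponent_le hc1 hxy) (log_nonneg hc1)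

lemma Real.hasDerivAt_rpow_add_rpow {a b : ℝ} (ha : 0 < a) (hb : 0 < b) (x : ℝ) :
    HasDerivAt (fun x : ℝ => a ^ x + b ^ x) (a ^ x * log a + b ^ x * log b) x :=
  (hasStrictDerivAt_const_rpow ha x).hasDerivAt.add (hasStrictDerivAt_const_rpow hb x).hasDerivAt

lemma Real.antitoneOn_rpow_add_rpow_Iic {a b t : ℝ} (ha : 0 < a) (hb : 0 < b)
    (h : a ^ t * log a + b ^ t * log b ≤ 0) : AntitoneOn (fun x : ℝ => a ^ x + b ^ x) (Iic t) := by
  have hdiff : Differentiable ℝ fun x : ℝ => a ^ x + b ^ x :=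
    fun x => (hasDerivAt_rpow_add_rpow ha hb x).differentiableAt
  refine antitoneOn_of_deriv_nonpos (convex_Iic t) hdiff.continuous.continuousOn
    hdiff.differentiableOn fun x hx => ?_
  rw [interior_Iic] at hx
  rw [(hasDerivAt_rpow_add_rpow ha hb x).deriv]
  linarith [monotone_rpow_mul_log ha hx.le, monotone_rpow_mul_log hb hx.le]

lemma mapsTo_one_div_natCast_add_one_Iic_one :
    MapsTo (fun k : ℕ => 1 / ((k : ℝ) + 1)) univ (Iic 1) :=
  fun k _ => mem_Iic.mpr <| (div_le_one₀ k.cast_add_one_pos).mpr (by simp)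

theorem umslr_mean_monotone_case_c_general (c₁ c₂ : ℝ)
    (hc₁pos : 0 < c₁) (hc₂ : 1 < c₂)
    (hW : c₁ * Real.log c₁ + c₂ * Real.log c₂ = 0) :
    Monotone (fun k : ℕ => (c₁ ^ (1 / ((k : ℝ) + 1)) + c₂ ^ (1 / ((k : ℝ) + 1))) / 2) ∨
    Antitone (fun k : ℕ => (c₁ ^ (1 / ((k : ℝ) + 1)) + c₂ ^ (1 / ((k : ℝ) + 1))) / 2) := by
  left
  have hg : AntitoneOn (fun x : ℝ => c₁ ^ x + c₂ ^ x) (Iic 1) :=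
    antitoneOn_rpow_add_rpow_Iic hc₁pos (one_pos.trans hc₂) (by simpa using hW.le)
  have hinv : AntitoneOn (fun k : ℕ => 1 / ((k : ℝ) + 1)) univ :=
    fun _ _ _ _ hkm => Nat.one_div_le_one_div hkm
  have hmean := monotoneOn_univ.mp (hg.comp hinv mapsTo_one_div_natCast_add_one_Iic_one)
  exact fun k m hkm => div_le_div_of_nonneg_right (hmean hkm) (zero_le_two (α := ℝ))

/-- Monotonicity of the mean of the UMSLR stochasticity factor when
`0 < c₁ < 1 < c₂` and `c₁ ln c₁ + c₂ ln c₂ = 0`, i.e.,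
`ln c₂ = W(−c₁ ln c₁)` with `W` the principal branch of the Lambert-W
function. -/
theorem umslr_mean_monotone_case_c (c₁ c₂ : ℝ)
    (hc₁pos : 0 < c₁) (hc₁ : c₁ < 1) (hc₂ : 1 < c₂)
    (hW : c₁ * Real.log c₁ + c₂ * Real.log c₂ = 0) :
    Monotone (fun k : ℕ => (c₁ ^ (1 / ((k : ℝ) + 1)) + c₂ ^ (1 / ((k : ℝ) + 1))) / 2) ∨
    Antitone (fun k : ℕ => (c₁ ^ (1 / ((k : ℝ) + 1)) + c₂ ^ (1 / ((k : ℝ) + 1))) / 2) :=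
  umslr_mean_monotone_case_c_general c₁ c₂ hc₁pos hc₂ hW
end

section
/- Let 0 < c_1 < 1 and c_2 > 1/c_1, and for each integer k ≥ 0 let E[u_k] = (c_1^{1/(k+1)} + c_2^{1/(k+1)})/2 be the mean of a uniform random variable on [c_1^{1/(k+1)}, c_2^{1/(k+1)}]. Then the sequence k ↦ E[u_k] is monotone for all k ≥ 0. -/
/-! For `a b > 0` with `a * b ≥ 1` the map `s ↦ a ^ s + b ^ s` is nondecreasing on `s ≥ 0`: with
`a ≤ b`, passing from `s` to `t = s + d` multiplies `a ^ s ≤ b ^ s` by `x = a ^ d` and `y = b ^ d`,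
where `y ≥ 1` and `x * y = (a * b) ^ d ≥ 1`, so `x + y ≥ 2` and the loss on the smaller term is
outweighed by the gain on the larger one. Hence `E[u_k]`, which evaluates this map at the
decreasing exponents `1 / (k + 1)`, is antitone. -/

open Real Set

lemma add_le_mul_add_mul {p q x y : ℝ} (hp : 0 ≤ p) (hpq : p ≤ q) (hy : 1 ≤ y)
    (hxy : 1 ≤ x * y) : p + q ≤ p * x + q * y := by
  have hx : 0 < x := by nlinarith
  have hsum : 2 ≤ x + y := by nlinarith [sq_nonneg (x - y)]
  nlinarith

lemma monotoneOn_rpow_add_rpow {a b : ℝ} (ha : 0 < a) (hb : 0 < b) (hab : 1 ≤ a * b) :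
    MonotoneOn (fun s : ℝ => a ^ s + b ^ s) (Ici 0) := by
  wlog hle : a ≤ b generalizing a b
  · simpa only [add_comm] using this hb ha (by linarith [mul_comm a b]) (by linarith)
  intro s (hs : 0 ≤ s) t _ hst
  have hb1 : 1 ≤ b := by nlinarith
  obtain ⟨d, hd, rfl⟩ : ∃ d, 0 ≤ d ∧ t = s + d := ⟨t - s, by linarith, by ring⟩
  simp only [rpow_add ha, rpow_add hb]
  apply add_le_mul_add_mul (rpow_nonneg ha.le s) (rpow_le_rpow ha.le hle hs) (one_le_rpow hb1 hd)
  rw [← mul_rpow ha.le hb.le]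
  exact one_le_rpow hab hd

theorem umslr_mean_monotone_case_d_general (c₁ c₂ : ℝ)
    (hc₁pos : 0 < c₁) (hc₂ : 1 / c₁ < c₂) :
    Monotone (fun k : ℕ => (c₁ ^ (1 / ((k : ℝ) + 1)) + c₂ ^ (1 / ((k : ℝ) + 1))) / 2) ∨
    Antitone (fun k : ℕ => (c₁ ^ (1 / ((k : ℝ) + 1)) + c₂ ^ (1 / ((k : ℝ) + 1))) / 2) := by
  right
  have hc₂pos : 0 < c₂ := lt_trans (by positivity) hc₂
  have hprod : 1 ≤ c₁ * c₂ := by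
    rw [div_lt_iff₀ hc₁pos] at hc₂
    linarith
  intro k m hkm
  have hexp : 1 / ((m : ℝ) + 1) ≤ 1 / ((k : ℝ) + 1) := by gcongr
  exact div_le_div_of_nonneg_right (monotoneOn_rpow_add_rpow hc₁pos hc₂pos hprod
    (by simp only [mem_Ici]; positivity) (by simp only [mem_Ici]; positivity) hexp) zero_le_two

/-- Monotonicity of the mean of the UMSLR stochasticity factor when
`0 < c₁ < 1` and `c₂ > 1/c₁`. -/
theorem umslr_mean_monotone_case_d (c₁ c₂ : ℝ)
    (hc₁pos : 0 < c₁) (hc₁ : c₁ < 1) (hc₂ : 1 / c₁ < c₂) :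
    Monotone (fun k : ℕ => (c₁ ^ (1 / ((k : ℝ) + 1)) + c₂ ^ (1 / ((k : ℝ) + 1))) / 2) ∨
    Antitone (fun k : ℕ => (c₁ ^ (1 / ((k : ℝ) + 1)) + c₂ ^ (1 / ((k : ℝ) + 1))) / 2) :=
  umslr_mean_monotone_case_d_general c₁ c₂ hc₁pos hc₂
end

section
/- Let 0 < c_1 < 1 < c_2. The function s ↦ c_1^{1/s} ln c_1 + c_2^{1/s} ln c_2, defined for s > 0, has a unique root at s̄ = (ln c_2 − ln c_1) / ln( −ln c_1 / ln c_2 ); consequently the derivative of s ↦ (c_1^{1/s} + c_2^{1/s})/2 vanishes only at s̄, and if c_1 ln c_1 + c_2 ln c_2 = 0 then s̄ = 1. -/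
/-!
Since `c₁^{1/s}(-ln c₁)` and `c₂^{1/s} ln c₂` are positive, the root equation
`c₁^{1/s} ln c₁ + c₂^{1/s} ln c₂ = 0` is equivalent to the equality of their logarithms,
`ln(-ln c₁ / ln c₂) = (ln c₂ - ln c₁)/s`, which is linear in `1/s` and has the single solution
`s̄`. The derivative of `s ↦ (c₁^{1/s} + c₂^{1/s})/2` is `-(c₁^{1/s} ln c₁ + c₂^{1/s} ln c₂)/(2s²)`,
so it vanishes exactly where the root equation holds, and the hypothesis
`c₁ ln c₁ + c₂ ln c₂ = 0` says that `s = 1` is that root.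
-/

open Real

lemma eq_div_iff_eq_div_of_ne_zero {L u s : ℝ} (hu : u ≠ 0) (hs : s ≠ 0) :
    L = u / s ↔ s = u / L := by
  by_cases hL : L = 0
  · simp [hL, hu, hs, eq_comm (a := (0 : ℝ))]
  · rw [eq_div_iff hs, eq_div_iff hL, mul_comm, eq_comm]

lemma rpow_one_div_mul_log_add_eq_zero_iff {c₁ c₂ s : ℝ} (hc₁pos : 0 < c₁) (hc₁ : c₁ < 1)
    (hc₂ : 1 < c₂) :
    c₁ ^ (1 / s) * log c₁ + c₂ ^ (1 / s) * log c₂ = 0 ↔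
      log (-log c₁ / log c₂) = (log c₂ - log c₁) / s := by
  have hc₂pos : 0 < c₂ := one_pos.trans hc₂
  have ha : 0 < -log c₁ := neg_pos.mpr (log_neg hc₁pos hc₁)
  have hb : 0 < log c₂ := log_pos hc₂
  have hlhs : 0 < c₁ ^ (1 / s) * -log c₁ := by positivity
  have hrhs : 0 < c₂ ^ (1 / s) * log c₂ := by positivity
  calc c₁ ^ (1 / s) * log c₁ + c₂ ^ (1 / s) * log c₂ = 0
      ↔ c₁ ^ (1 / s) * -log c₁ = c₂ ^ (1 / s) * log c₂ := by
        constructor <;> intro h <;> linarith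
    _ ↔ log (c₁ ^ (1 / s) * -log c₁) = log (c₂ ^ (1 / s) * log c₂) :=
        (log_injOn_pos.eq_iff hlhs hrhs).symm
    _ ↔ 1 / s * log c₁ + log (-log c₁) = 1 / s * log c₂ + log (log c₂) := by
        rw [log_mul (by positivity) ha.ne', log_mul (by positivity) hb.ne',
          log_rpow hc₁pos, log_rpow hc₂pos]
    _ ↔ log (-log c₁ / log c₂) = (log c₂ - log c₁) / s := by
        rw [log_div ha.ne' hb.ne']
        constructor <;> intro h <;> linarith [show (log c₂ - log c₁) / s =
          1 / s * log c₂ - 1 / s * log c₁ by ring]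

lemma hasDerivAt_rpow_one_div {c s : ℝ} (hc : 0 < c) (hs : s ≠ 0) :
    HasDerivAt (fun t : ℝ => c ^ (1 / t)) (-(c ^ (1 / s) * log c) / s ^ 2) s := by
  have hinv : HasDerivAt (fun t : ℝ => 1 / t) (-(s ^ 2)⁻¹) s := by
    simpa only [one_div] using hasDerivAt_inv hs
  exact ((hasStrictDerivAt_const_rpow hc (1 / s)).hasDerivAt.comp s hinv).congr_deriv (by ring)

lemma deriv_rpow_one_div_add_rpow_one_div_div_two {c₁ c₂ s : ℝ} (hc₁ : 0 < c₁) (hc₂ : 0 < c₂)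
    (hs : s ≠ 0) :
    deriv (fun t : ℝ => (c₁ ^ (1 / t) + c₂ ^ (1 / t)) / 2) s =
      -(c₁ ^ (1 / s) * log c₁ + c₂ ^ (1 / s) * log c₂) / (2 * s ^ 2) := by
  have h : HasDerivAt (fun t : ℝ => (c₁ ^ (1 / t) + c₂ ^ (1 / t)) / 2)
      ((-(c₁ ^ (1 / s) * log c₁) / s ^ 2 + -(c₂ ^ (1 / s) * log c₂) / s ^ 2) / 2) s :=
    ((hasDerivAt_rpow_one_div hc₁ hs).add (hasDerivAt_rpow_one_div hc₂ hs)).div_const 2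
  rw [h.deriv]
  ring

/-- For `0 < c₁ < 1 < c₂`, the function `s ↦ c₁^{1/s} ln c₁ + c₂^{1/s} ln c₂`
has a unique root on `s > 0` at `s̄ = (ln c₂ − ln c₁)/ln(−ln c₁/ln c₂)`;
consequently the derivative of `s ↦ (c₁^{1/s} + c₂^{1/s})/2` vanishes on
`s > 0` only at `s̄`, and if `c₁ ln c₁ + c₂ ln c₂ = 0` then `s̄ = 1`. -/
theorem umslr_mean_derivative_unique_root (c₁ c₂ : ℝ)
    (hc₁pos : 0 < c₁) (hc₁ : c₁ < 1) (hc₂ : 1 < c₂) :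
    (∀ s : ℝ, 0 < s →
      (c₁ ^ (1 / s) * Real.log c₁ + c₂ ^ (1 / s) * Real.log c₂ = 0 ↔
        s = (Real.log c₂ - Real.log c₁) / Real.log (-Real.log c₁ / Real.log c₂))) ∧
    (∀ s : ℝ, 0 < s →
      (deriv (fun t : ℝ => (c₁ ^ (1 / t) + c₂ ^ (1 / t)) / 2) s = 0 ↔
        s = (Real.log c₂ - Real.log c₁) / Real.log (-Real.log c₁ / Real.log c₂))) ∧
    (c₁ * Real.log c₁ + c₂ * Real.log c₂ = 0 →
      (Real.log c₂ - Real.log c₁) / Real.log (-Real.log c₁ / Real.log c₂) = 1) := by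
  have hgap : log c₂ - log c₁ ≠ 0 :=
    (sub_pos.mpr ((log_neg hc₁pos hc₁).trans (log_pos hc₂))).ne'
  have root : ∀ s : ℝ, 0 < s →
      (c₁ ^ (1 / s) * log c₁ + c₂ ^ (1 / s) * log c₂ = 0 ↔
        s = (log c₂ - log c₁) / log (-log c₁ / log c₂)) := fun s hs =>
    (rpow_one_div_mul_log_add_eq_zero_iff hc₁pos hc₁ hc₂).trans
      (eq_div_iff_eq_div_of_ne_zero hgap hs.ne')
  refine ⟨root, fun s hs => ?_, fun h => ((root 1 one_pos).mp (by simpa using h)).symm⟩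
  rw [deriv_rpow_one_div_add_rpow_one_div_div_two hc₁pos (one_pos.trans hc₂) hs.ne',
    div_eq_zero_iff, neg_eq_zero, or_iff_left (by positivity)]
  exact root s hs
end
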